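/- Let m > 1 be an integer, L > 0 and δ > 0. There exists a constant C > 0, depending only on m and L, with the following property. For every integer N ≥ 1 (J = 2N, h = L/N, x_j = jh, y_k = kh), every τ ≥ 0, and every a : ℤ × ℤ → ℂ with |u|_m² := Σ_{(p,q)∈ℤ²} (p² + q²)^m |a_{pq}|² < ∞, define λ_{pq} = π²(p²+q²)/L² − δ(π²(p²+q²)/L²)², u(x,y) = Σ_{p,q∈ℤ} a_{pq} e^{iπ(px+qy)/L}, the exact evolved grid values w_{j,k} = Σ_{p,q∈ℤ} e^{λ_{pq}τ} a_{pq} e^{iπ(p x_j + q y_k)/L}, the discrete coefficients ũ_{pq} = (1/(J² c_p c_q)) Σ_{j,k=1}^{J} u(x_j,y_k) e^{−iπ(p x_j + q y_k)/L} for −N ≤ p,q ≤ N (c_r = 2 if |r| = N, c_r = 1 if |r| < N), and the pseudo-spectral evolved grid values w̃_{j,k} = Σ_{p=−N}^{N} Σ_{q=−N}^{N} e^{λ_{pq}τ} ũ_{pq} e^{iπ(p x_j + q y_k)/L}. Then h² Σ_{j,k=1}^{J} |w_{j,k} − w̃_{j,k}|² ≤ C² e^{τ/(2δ)} N^{−2m}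 |u|_m², i.e. the discrete L²-error is at most C |u|_m e^{τ/(4δ)} N^{−m}. -/

import Mathlib

/-!
On the grid `x_j = j L / N` the mode `e^{iπ(p x + q y)/L}` only depends on `(p, q)` modulo `2N`.
Sampling therefore folds every Fourier coefficient onto a representative `(p, q) ∈ [-N, N)²`:
the grid values of `u` are those of the trigonometric polynomial with the aliased coefficients
`A_{pq} = Σ_l a_{(p,q) + 2N l}`, and the discrete transform recovers `A_{pq}` exactly (the
weights `c_{±N} = 2` split the Nyquist mode evenly between `±N`). Hence `w − w̃` is the
trigonometric polynomial with coefficients `Σ_{l ≠ 0} (e^{λ_{(p,q)+2Nl} τ} − e^{λ_{pq} τ})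
a_{(p,q)+2Nl}`, and by the discrete Parseval identity its squared grid norm is `(2N)²` times the
sum of their squares. Every exponential is at most `e^{τ/(4δ)}` because `s − δ s² ≤ 1/(4δ)`, and
`|(p,q) + 2N l| ≥ N |l|` on `[-N, N]²`, so Cauchy–Schwarz against the weights
`|(p,q) + 2N l|^{2m}` bounds the squared coefficient by `4 e^{τ/(2δ)} N^{-2m} Σ_{l ≠ 0} |l|^{-2m}`
times the part of `|u|_m²` carried by the frequencies aliased to `(p, q)`; the lattice sum
converges since `m > 1`.
-/

open Complex ComplexConjugate Finset

section RootsOfUnity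

variable {n : ℕ}

lemma sum_Icc_zpow_eq_zero {K : Type*} [Field K] {x : K} (hx : x ^ n = 1) (hx1 : x ≠ 1) :
    ∑ j ∈ Icc (1 : ℤ) n, x ^ j = 0 := by
  have hpow : ∀ i : ℕ, x ^ (1 + (i : ℤ)) = x * x ^ i := fun i => by
    rw [← Nat.cast_one, ← Nat.cast_add, zpow_natCast, pow_add, pow_one]
  rw [Int.Icc_eq_finset_map, sum_map]
  simp only [add_sub_cancel_right, Int.toNat_natCast, Function.Embedding.trans_apply,
    Nat.castEmbedding_apply, addLeftEmbedding_apply, hpow, ← mul_sum, geom_sum_eq hx1, hx,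
    sub_self, zero_div, mul_zero]

lemma IsPrimitiveRoot.sum_Icc_zpow_mul {K : Type*} [Field K] {ζ : K} (hζ : IsPrimitiveRoot ζ n)
    (r : ℤ) : ∑ j ∈ Icc (1 : ℤ) n, ζ ^ (r * j) = if (n : ℤ) ∣ r then (n : K) else 0 := by
  simp_rw [zpow_mul]
  split_ifs with h
  · simp [(hζ.zpow_eq_one_iff_dvd r).mpr h]
  · refine sum_Icc_zpow_eq_zero ?_ (mt (hζ.zpow_eq_one_iff_dvd r).mp h)
    rw [← zpow_natCast, ← zpow_mul, mul_comm, zpow_mul, zpow_natCast, hζ.pow_eq_one, one_zpow]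

lemma IsPrimitiveRoot.sum_Icc_sum_Icc_zpow {K : Type*} [Field K] [NeZero n] {ζ : K}
    (hζ : IsPrimitiveRoot ζ n) (r s : ℤ) :
    ∑ j ∈ Icc (1 : ℤ) n, ∑ k ∈ Icc (1 : ℤ) n, ζ ^ (r * j + s * k)
      = if (n : ℤ) ∣ r ∧ (n : ℤ) ∣ s then (n : K) ^ 2 else 0 := by
  simp_rw [zpow_add₀ (hζ.ne_zero (NeZero.ne n)), ← mul_sum, ← sum_mul, hζ.sum_Icc_zpow_mul]
  by_cases hr : (n : ℤ) ∣ r <;> by_cases hs : (n : ℤ) ∣ s <;> simp [hr, hs, sq]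

lemma IsPrimitiveRoot.zpow_add_mul {K : Type*} [Field K] [NeZero n] {ζ : K}
    (hζ : IsPrimitiveRoot ζ n) (a b : ℤ) : ζ ^ (a + n * b) = ζ ^ a := by
  rw [zpow_add₀ (hζ.ne_zero (NeZero.ne n)), zpow_mul, zpow_natCast, hζ.pow_eq_one, one_zpow,
    mul_one]

lemma IsPrimitiveRoot.sum_norm_sq_sum_mul_zpow {ζ : ℂ} (hζ : IsPrimitiveRoot ζ n) (hn : n ≠ 0)
    {S : Finset ℤ} (hS : ∀ p ∈ S, ∀ p' ∈ S, (n : ℤ) ∣ p - p' → p = p') (d : ℤ → ℂ) :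
    ∑ j ∈ Icc (1 : ℤ) n, ‖∑ p ∈ S, d p * ζ ^ (p * j)‖ ^ 2 = n * ∑ p ∈ S, ‖d p‖ ^ 2 := by
  have hζ0 : ζ ≠ 0 := hζ.ne_zero hn
  have hconj : ∀ t : ℤ, conj (ζ ^ t) = ζ ^ (-t) := fun t => by
    rw [map_zpow₀, ← inv_eq_conj (hζ.norm'_eq_one hn), inv_zpow', zpow_neg]
  have hdiag : ∀ p ∈ S, ∑ p' ∈ S, d p * conj (d p') * (if (n : ℤ) ∣ p - p' then (n : ℂ) else 0)
      = n * (d p * conj (d p)) := fun p hp => by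
    rw [sum_eq_single_of_mem p hp (fun p' hp' hne => by
      rw [if_neg (mt (hS p hp p' hp') hne.symm), mul_zero]), sub_self, if_pos (dvd_zero _)]
    ring
  apply Complex.ofReal_injective
  push_cast
  simp_rw [← mul_conj', map_sum, map_mul, hconj, sum_mul_sum, mul_sum]
  calc ∑ j ∈ Icc (1 : ℤ) n, ∑ p ∈ S, ∑ p' ∈ S, d p * ζ ^ (p * j) * (conj (d p') * ζ ^ (-(p' * j)))
      = ∑ p ∈ S, ∑ p' ∈ S, d p * conj (d p') * ∑ j ∈ Icc (1 : ℤ) n, ζ ^ ((p - p') * j) := by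
        rw [sum_comm]
        refine sum_congr rfl fun p _ => ?_
        rw [sum_comm]
        refine sum_congr rfl fun p' _ => ?_
        rw [mul_sum]
        refine sum_congr rfl fun j _ => ?_
        rw [sub_mul, sub_eq_add_neg, zpow_add₀ hζ0]
        ring
    _ = ∑ p ∈ S, n * (d p * conj (d p)) := by
        simp_rw [hζ.sum_Icc_zpow_mul]
        exact sum_congr rfl hdiag

lemma IsPrimitiveRoot.sum_sum_norm_sq_sum_sum_mul_zpow {ζ : ℂ} (hζ : IsPrimitiveRoot ζ n)
    (hn : n ≠ 0) {S : Finset ℤ} (hS : ∀ p ∈ S, ∀ p' ∈ S, (n : ℤ) ∣ p - p' → p = p')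
    (D : ℤ → ℤ → ℂ) :
    ∑ j ∈ Icc (1 : ℤ) n, ∑ k ∈ Icc (1 : ℤ) n,
        ‖∑ p ∈ S, ∑ q ∈ S, D p q * ζ ^ (p * j + q * k)‖ ^ 2
      = n ^ 2 * ∑ p ∈ S, ∑ q ∈ S, ‖D p q‖ ^ 2 := by
  have hsplit : ∀ j k : ℤ, ∑ p ∈ S, ∑ q ∈ S, D p q * ζ ^ (p * j + q * k)
      = ∑ q ∈ S, (∑ p ∈ S, D p q * ζ ^ (p * j)) * ζ ^ (q * k) := fun j k => by
    rw [sum_comm]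
    simp_rw [sum_mul, zpow_add₀ (hζ.ne_zero hn), mul_assoc]
  simp_rw [hsplit, hζ.sum_norm_sq_sum_mul_zpow hn hS, ← mul_sum]
  rw [sum_comm, sq, mul_assoc]
  simp_rw [hζ.sum_norm_sq_sum_mul_zpow hn hS, ← mul_sum]
  rw [sum_comm]

end RootsOfUnity

lemma eq_of_mem_Ico_of_dvd_sub {N : ℕ} {p p' : ℤ} (hp : p ∈ Ico (-(N : ℤ)) N)
    (hp' : p' ∈ Ico (-(N : ℤ)) N) (h : ((2 * N : ℕ) : ℤ) ∣ p - p') : p = p' := by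
  rw [mem_Ico] at hp hp'
  exact sub_eq_zero.mp (Int.eq_zero_of_abs_lt_dvd h (by rw [abs_lt]; push_cast; omega))

noncomputable section Aliasing

variable (N : ℕ)

def aliasFreq (p q : ℤ) (l : ℤ × ℤ) : ℤ × ℤ := (p + 2 * N * l.1, q + 2 * N * l.2)

def aliasSum {E : Type*} [AddCommMonoid E] [TopologicalSpace E] (b : ℤ × ℤ → E) (p q : ℤ) : E :=
  ∑' l, b (aliasFreq N p q l)

lemma aliasSum_add_two_mul_left {E : Type*} [AddCommMonoid E] [TopologicalSpace E]
    (b : ℤ × ℤ → E) (p q : ℤ) : aliasSum N b (p + 2 * N) q = aliasSum N b p q := by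
  rw [aliasSum, aliasSum, ← ((Equiv.addRight (1 : ℤ)).prodCongr (Equiv.refl ℤ)).tsum_eq
    (fun l => b (aliasFreq N p q l))]
  congr! 2 with l
  simp only [aliasFreq, Equiv.prodCongr_apply, Prod.map, Equiv.coe_addRight, Equiv.refl_apply]
  ring_nf

lemma aliasSum_add_two_mul_right {E : Type*} [AddCommMonoid E] [TopologicalSpace E]
    (b : ℤ × ℤ → E) (p q : ℤ) : aliasSum N b p (q + 2 * N) = aliasSum N b p q := by
  rw [aliasSum, aliasSum, ← ((Equiv.refl ℤ).prodCongr (Equiv.addRight (1 : ℤ))).tsum_eq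
    (fun l => b (aliasFreq N p q l))]
  congr! 2 with l
  simp only [aliasFreq, Equiv.prodCongr_apply, Prod.map, Equiv.coe_addRight, Equiv.refl_apply]
  ring_nf

variable [NeZero N]

lemma aliasFreq_injective (p q : ℤ) : Function.Injective (aliasFreq N p q) := by
  have h2N : (2 * N : ℤ) ≠ 0 := by have := NeZero.ne N; omega
  intro l l' h
  simp only [aliasFreq, Prod.mk.injEq, add_right_inj, mul_right_inj' h2N] at h
  exact Prod.ext h.1 h.2

def residueEquiv : (Ico (-(N : ℤ)) N) × ℤ ≃ ℤ :=
  Equiv.ofBijective (fun x => x.1 + 2 * N * x.2) <| by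
    have h2N : (0 : ℤ) < 2 * N := by have := NeZero.pos N; omega
    refine ⟨fun ⟨r, l⟩ ⟨r', l'⟩ h => ?_, fun P => ?_⟩
    · have hr : (r : ℤ) = r' := eq_of_mem_Ico_of_dvd_sub r.2 r'.2
        ⟨l' - l, by push_cast; linarith⟩
      have hl : l = l' := by
        have : 2 * (N : ℤ) * l = 2 * N * l' := by simp only at h; linarith
        exact mul_left_cancel₀ h2N.ne' this
      simp [Subtype.ext hr, hl]
    · have h1 := Int.emod_add_mul_ediv (P + N) (2 * N)
      have h2 := Int.emod_nonneg (P + N) h2N.ne'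
      have h3 := Int.emod_lt_of_pos (P + N) h2N
      refine ⟨(⟨P - 2 * N * ((P + N) / (2 * N)), ?_⟩, (P + N) / (2 * N)), by simp⟩
      rw [mem_Ico]; constructor <;> linarith

lemma Summable.tsum_eq_sum_aliasSum {E : Type*} [AddCommGroup E] [UniformSpace E]
    [IsUniformAddGroup E] [CompleteSpace E] [T2Space E] {f : ℤ × ℤ → E} (hf : Summable f) :
    ∑' P, f P = ∑ p ∈ Ico (-(N : ℤ)) N, ∑ q ∈ Ico (-(N : ℤ)) N, aliasSum N f p q := by
  set R := Ico (-(N : ℤ)) N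
  let e : (R × R) × (ℤ × ℤ) ≃ ℤ × ℤ :=
    (Equiv.prodProdProdComm R R ℤ ℤ).trans ((residueEquiv N).prodCongr (residueEquiv N))
  have he : Summable fun c => f (e c) := e.summable_iff.mpr hf
  rw [← e.tsum_eq, he.tsum_prod, tsum_fintype, Fintype.sum_prod_type, ← sum_coe_sort R]
  refine sum_congr rfl fun p _ => ?_
  rw [← sum_coe_sort R]
  rfl

end Aliasing

section Grid

variable {N : ℕ} [NeZero N] {ζ : ℂ}

lemma IsPrimitiveRoot.summable_mul_zpow (hζ : IsPrimitiveRoot ζ (2 * N))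
    {ι : Type*} {b : ι → ℂ} (hb : Summable b) (e : ι → ℤ) : Summable fun i => b i * ζ ^ e i := by
  refine Summable.of_norm ((summable_norm_iff.mpr hb).congr fun P => ?_)
  rw [norm_mul, norm_zpow, hζ.norm'_eq_one (NeZero.ne (2 * N)), one_zpow, mul_one]

lemma IsPrimitiveRoot.tsum_tsum_mul_zpow_eq_sum_aliasSum (hζ : IsPrimitiveRoot ζ (2 * N))
    {b : ℤ × ℤ → ℂ} (hb : Summable b) (j k : ℤ) :
    ∑' p : ℤ, ∑' q : ℤ, b (p, q) * ζ ^ (p * j + q * k)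
      = ∑ p ∈ Ico (-(N : ℤ)) N, ∑ q ∈ Ico (-(N : ℤ)) N, aliasSum N b p q * ζ ^ (p * j + q * k) := by
  have hF := hζ.summable_mul_zpow hb fun P => P.1 * j + P.2 * k
  rw [← hF.tsum_prod, hF.tsum_eq_sum_aliasSum N]
  refine sum_congr rfl fun p _ => sum_congr rfl fun q _ => ?_
  rw [aliasSum, aliasSum, ← tsum_mul_right]
  congr! 2 with l
  rw [aliasFreq, show (p + 2 * N * l.1) * j + (q + 2 * N * l.2) * k
    = p * j + q * k + ((2 * N : ℕ) : ℤ) * (l.1 * j + l.2 * k) by push_cast; ring, hζ.zpow_add_mul]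

lemma IsPrimitiveRoot.sum_sum_tsum_mul_zpow_sub (hζ : IsPrimitiveRoot ζ (2 * N))
    {b : ℤ × ℤ → ℂ} (hb : Summable b) (p q : ℤ) :
    ∑ j ∈ Icc (1 : ℤ) (2 * N), ∑ k ∈ Icc (1 : ℤ) (2 * N),
        ∑' P : ℤ × ℤ, b P * ζ ^ ((P.1 - p) * j + (P.2 - q) * k)
      = ((2 * N : ℕ) : ℂ) ^ 2 * aliasSum N b p q := by
  have horth := hζ.sum_Icc_sum_Icc_zpow
  push_cast at horth ⊢
  rw [sum_congr rfl fun j _ => (Summable.tsum_finsetSum fun k _ => hζ.summable_mul_zpow hb _).symm,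
    ← Summable.tsum_finsetSum fun j _ => summable_sum fun k _ => hζ.summable_mul_zpow hb _]
  simp_rw [← mul_sum, horth]
  have hsupp : Function.support (fun P : ℤ × ℤ => b P *
      if 2 * (N : ℤ) ∣ P.1 - p ∧ 2 * (N : ℤ) ∣ P.2 - q then (2 * (N : ℂ)) ^ 2 else 0)
      ⊆ Set.range (aliasFreq N p q) := by
    intro P hP
    obtain ⟨⟨l, hl⟩, ⟨l', hl'⟩⟩ : 2 * (N : ℤ) ∣ P.1 - p ∧ 2 * (N : ℤ) ∣ P.2 - q := by
      by_contra h
      simp [h] at hP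
    exact ⟨(l, l'), by simp only [aliasFreq]; ext <;> simp only <;> linarith⟩
  rw [← (aliasFreq_injective N p q).tsum_eq hsupp, aliasSum, ← tsum_mul_left]
  refine tsum_congr fun l => ?_
  simp only [aliasFreq, add_sub_cancel_left, dvd_mul_right, and_self, if_true]
  ring

lemma IsPrimitiveRoot.sum_sum_tsum_tsum_mul_zpow_mul_inv_eq (hζ : IsPrimitiveRoot ζ (2 * N))
    {b : ℤ × ℤ → ℂ} (hb : Summable b) (p q : ℤ) :
    ∑ j ∈ Icc (1 : ℤ) (2 * N), ∑ k ∈ Icc (1 : ℤ) (2 * N),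
        (∑' p' : ℤ, ∑' q' : ℤ, b (p', q') * ζ ^ (p' * j + q' * k)) * (ζ ^ (p * j + q * k))⁻¹
      = ((2 * N : ℕ) : ℂ) ^ 2 * aliasSum N b p q := by
  rw [← hζ.sum_sum_tsum_mul_zpow_sub hb]
  refine sum_congr rfl fun j _ => sum_congr rfl fun k _ => ?_
  rw [← (hζ.summable_mul_zpow hb fun P : ℤ × ℤ => P.1 * j + P.2 * k).tsum_prod, ← tsum_mul_right]
  refine tsum_congr fun P => ?_
  rw [mul_assoc, ← zpow_neg, ← zpow_add₀ (hζ.ne_zero (NeZero.ne _))]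
  ring_nf

lemma sum_Icc_inv_mul_eq_sum_Ico {c : ℤ → ℂ} (hc : ∀ r, c r = if |r| = N then 2 else 1)
    {g : ℤ → ℂ} (hg : g (-N) = g N) :
    ∑ p ∈ Icc (-(N : ℤ)) N, (c p)⁻¹ * g p = ∑ p ∈ Ico (-(N : ℤ)) N, g p := by
  have hN : (0 : ℤ) < N := by exact_mod_cast NeZero.pos N
  have hc1 : ∀ p ∈ Ioo (-(N : ℤ)) N, c p = 1 := fun p hp => by
    rw [mem_Ioo] at hp
    rw [hc, if_neg (by rw [abs_eq hN.le]; omega)]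
  rw [← Ico_insert_right (by omega), sum_insert (by simp), ← Ioo_insert_left (by omega),
    sum_insert (by simp), sum_insert (by simp),
    sum_congr rfl fun p hp => by rw [hc1 p hp, inv_one, one_mul], hc, hc, hg]
  simp only [abs_neg, Nat.abs_cast, if_true]
  ring

lemma sum_Icc_sum_Icc_inv_mul_eq_sum_Ico_sum_Ico {c : ℤ → ℂ}
    (hc : ∀ r, c r = if |r| = N then 2 else 1) {g : ℤ → ℤ → ℂ} (hg₁ : ∀ q, g (-N) q = g N q)
    (hg₂ : ∀ p, g p (-N) = g p N) :
    ∑ p ∈ Icc (-(N : ℤ)) N, ∑ q ∈ Icc (-(N : ℤ)) N, (c p * c q)⁻¹ * g p q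
      = ∑ p ∈ Ico (-(N : ℤ)) N, ∑ q ∈ Ico (-(N : ℤ)) N, g p q := by
  simp_rw [mul_inv, mul_assoc, ← mul_sum]
  rw [sum_Icc_inv_mul_eq_sum_Ico hc (by simp only [hg₁])]
  exact sum_congr rfl fun p _ => sum_Icc_inv_mul_eq_sum_Ico hc (hg₂ p)

lemma IsPrimitiveRoot.sum_norm_sq_pseudoSpectral_error_eq (hζ : IsPrimitiveRoot ζ (2 * N))
    {a : ℤ × ℤ → ℂ} (ha : Summable a) {μ : ℤ → ℤ → ℂ}
    (hμa : Summable fun P : ℤ × ℤ => μ P.1 P.2 * a P) (hμ₁ : ∀ q, μ (-N) q = μ N q)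
    (hμ₂ : ∀ p, μ p (-N) = μ p N) {c : ℤ → ℂ} (hc : ∀ r, c r = if |r| = N then 2 else 1)
    {w ut wt : ℤ → ℤ → ℂ}
    (hw : ∀ j k, w j k = ∑' p : ℤ, ∑' q : ℤ, μ p q * a (p, q) * ζ ^ (p * j + q * k))
    (hut : ∀ p q, ut p q = 1 / (((2 * N : ℕ) : ℂ) ^ 2 * c p * c q) *
      ∑ j ∈ Icc (1 : ℤ) (2 * N), ∑ k ∈ Icc (1 : ℤ) (2 * N),
        (∑' p' : ℤ, ∑' q' : ℤ, a (p', q') * ζ ^ (p' * j + q' * k)) * (ζ ^ (p * j + q * k))⁻¹)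
    (hwt : ∀ j k, wt j k = ∑ p ∈ Icc (-(N : ℤ)) N, ∑ q ∈ Icc (-(N : ℤ)) N,
      μ p q * ut p q * ζ ^ (p * j + q * k)) :
    ∑ j ∈ Icc (1 : ℤ) (2 * N), ∑ k ∈ Icc (1 : ℤ) (2 * N), ‖w j k - wt j k‖ ^ 2
      = ((2 * N : ℕ) : ℝ) ^ 2 * ∑ p ∈ Ico (-(N : ℤ)) N, ∑ q ∈ Ico (-(N : ℤ)) N,
          ‖aliasSum N (fun P => (μ P.1 P.2 - μ p q) * a P) p q‖ ^ 2 := by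
  have hut' : ∀ p q, ut p q = (c p * c q)⁻¹ * aliasSum N a p q := fun p q => by
    have hc0 : ∀ r, c r ≠ 0 := fun r => by rw [hc]; split_ifs <;> norm_num
    have h2N : ((2 * N : ℕ) : ℂ) ≠ 0 := by exact_mod_cast NeZero.ne _
    rw [hut, hζ.sum_sum_tsum_tsum_mul_zpow_mul_inv_eq ha]
    field_simp [hc0 p, hc0 q]
  have hwt' : ∀ j k, wt j k = ∑ p ∈ Ico (-(N : ℤ)) N, ∑ q ∈ Ico (-(N : ℤ)) N,
      μ p q * aliasSum N a p q * ζ ^ (p * j + q * k) := fun j k => by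
    have hshift : ∀ s t : ℤ, ζ ^ (-N * s + t) = ζ ^ (N * s + t) := fun s t => by
      rw [← hζ.zpow_add_mul _ s]; push_cast; ring_nf
    rw [← sum_Icc_sum_Icc_inv_mul_eq_sum_Ico_sum_Ico hc (fun q => ?_) (fun p => ?_), hwt]
    · refine sum_congr rfl fun p _ => sum_congr rfl fun q _ => ?_
      rw [hut']
      ring
    · rw [hμ₁, ← aliasSum_add_two_mul_left, hshift]
      ring_nf
    · rw [hμ₂, ← aliasSum_add_two_mul_right, add_comm (p * j), add_comm (p * j), hshift]
      ring_nf
  have hdiff : ∀ j k, w j k - wt j k = ∑ p ∈ Ico (-(N : ℤ)) N, ∑ q ∈ Ico (-(N : ℤ)) N,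
      aliasSum N (fun P => (μ P.1 P.2 - μ p q) * a P) p q * ζ ^ (p * j + q * k) := fun j k => by
    rw [(hw j k).trans (hζ.tsum_tsum_mul_zpow_eq_sum_aliasSum hμa j k), hwt', ← sum_sub_distrib]
    refine sum_congr rfl fun p _ => ?_
    rw [← sum_sub_distrib]
    refine sum_congr rfl fun q _ => ?_
    have hψ := aliasFreq_injective N p q
    rw [← sub_mul, aliasSum, aliasSum, aliasSum, ← tsum_mul_left, ← Summable.tsum_sub]
    · congr 2 with l
      ring
    · exact hμa.comp_injective hψ
    · exact (ha.comp_injective hψ).mul_left _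
  have hpars := hζ.sum_sum_norm_sq_sum_sum_mul_zpow (NeZero.ne _)
    (fun p hp p' hp' => eq_of_mem_Ico_of_dvd_sub hp hp')
    fun p q => aliasSum N (fun P => (μ P.1 P.2 - μ p q) * a P) p q
  push_cast at hpars ⊢
  simp_rw [hdiff, hpars]

end Grid

noncomputable section

def freqSq (P : ℤ × ℤ) : ℝ := (P.1 : ℝ) ^ 2 + (P.2 : ℝ) ^ 2

lemma freqSq_nonneg (P : ℤ × ℤ) : 0 ≤ freqSq P := by unfold freqSq; positivity

lemma freqSq_pos {P : ℤ × ℤ} (hP : P ≠ 0) : 0 < freqSq P := by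
  unfold freqSq
  rcases P with ⟨p, q⟩
  simp only [ne_eq, Prod.mk_eq_zero, not_and_or] at hP
  rcases hP with h | h <;> positivity

/-- `Σ_{P ≠ 0} |P|^{-2m}`: the term `P = 0` is `0⁻¹ = 0`. -/
def epsteinZeta (m : ℕ) : ℝ := ∑' P : ℤ × ℤ, (freqSq P ^ m)⁻¹

lemma summable_freqSq_pow_inv {m : ℕ} (hm : 1 < m) :
    Summable fun P : ℤ × ℤ => (freqSq P ^ m)⁻¹ := by
  have hk : (2 : ℝ) < ((2 * m : ℕ) : ℝ) := by norm_cast; omega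
  refine ((EisensteinSeries.summable_one_div_norm_rpow hk).comp_injective
    (finTwoArrowEquiv ℤ).symm.injective).of_norm_bounded_eventually ?_
  filter_upwards [Filter.eventually_cofinite_ne 0] with P hP
  set x := (finTwoArrowEquiv ℤ).symm P
  have hx : ‖x‖ ^ 2 ≤ freqSq P := by
    rw [EisensteinSeries.norm_eq_max_natAbs, freqSq]
    simp only [x, finTwoArrowEquiv_symm_apply, Matrix.cons_val_zero, Matrix.cons_val_one]
    rcases max_cases P.1.natAbs P.2.natAbs with ⟨h, -⟩ | ⟨h, -⟩ <;>
      rw [h, Nat.cast_natAbs, Int.cast_abs, sq_abs] <;> nlinarith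
  have hx0 : 0 < ‖x‖ := norm_pos_iff.mpr fun h =>
    hP (by simpa [x, Prod.zero_eq_mk] using congrArg (finTwoArrowEquiv ℤ) h)
  rw [Function.comp_apply, Real.rpow_neg (norm_nonneg _), Real.rpow_natCast, pow_mul,
    Real.norm_of_nonneg (inv_nonneg.mpr (pow_nonneg (freqSq_nonneg P) m))]
  exact inv_anti₀ (by positivity) (pow_le_pow_left₀ (by positivity) hx m)

lemma epsteinZeta_pos {m : ℕ} (hm : 1 < m) : 0 < epsteinZeta m :=
  (summable_freqSq_pow_inv hm).tsum_pos (fun P => inv_nonneg.mpr (pow_nonneg (freqSq_nonneg P) m))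
    (1, 0) (by simp [freqSq])

lemma le_inv_add_mul_sq {w t : ℝ} (hw : 0 < w) (ht : 0 ≤ t) : t ≤ w⁻¹ + w * t ^ 2 := by
  have h := mul_nonneg (inv_nonneg.mpr hw.le) (sq_nonneg (w * t - 1))
  have h' : w⁻¹ * (w * t - 1) ^ 2 = w * t ^ 2 - 2 * t + w⁻¹ := by field_simp; ring
  linarith

lemma summable_of_summable_freqSq_pow_mul_norm_sq {m : ℕ} (hm : 1 < m) {a : ℤ × ℤ → ℂ}
    (ha : Summable fun P => freqSq P ^ m * ‖a P‖ ^ 2) : Summable a := by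
  refine ((summable_freqSq_pow_inv hm).add ha).of_norm_bounded_eventually ?_
  filter_upwards [Filter.eventually_cofinite_ne 0] with P hP
  exact le_inv_add_mul_sq (pow_pos (freqSq_pos hP) m) (norm_nonneg _)

lemma sq_tsum_le_tsum_mul_tsum_of_sq_le_mul {ι : Type*} {r f g : ι → ℝ} (hr : ∀ i, 0 ≤ r i)
    (hf : ∀ i, 0 ≤ f i) (hg : ∀ i, 0 ≤ g i) (ht : ∀ i, r i ^ 2 ≤ f i * g i)
    (hfs : Summable f) (hgs : Summable g) :
    (∑' i, r i) ^ 2 ≤ (∑' i, f i) * ∑' i, g i := by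
  have hFG : 0 ≤ (∑' i, f i) * ∑' i, g i := mul_nonneg (tsum_nonneg hf) (tsum_nonneg hg)
  have hle : ∑' i, r i ≤ √((∑' i, f i) * ∑' i, g i) :=
    tsum_le_of_sum_le' (Real.sqrt_nonneg _) fun s => Real.le_sqrt_of_sq_le <|
      (s.sum_sq_le_sum_mul_sum_of_sq_le_mul (fun i _ => hf i) (fun i _ => hg i)
        fun i _ => ht i).trans
        (mul_le_mul (hfs.sum_le_tsum s fun i _ => hf i) (hgs.sum_le_tsum s fun i _ => hg i)
          (sum_nonneg fun i _ => hg i) (tsum_nonneg hf))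
  calc (∑' i, r i) ^ 2 ≤ √((∑' i, f i) * ∑' i, g i) ^ 2 := pow_le_pow_left₀ (tsum_nonneg hr) hle 2
    _ = _ := Real.sq_sqrt hFG

lemma sq_mul_le_sq_add_two_mul {N p l : ℤ} (hp : |p| ≤ N) : (N * l) ^ 2 ≤ (p + 2 * N * l) ^ 2 := by
  rw [abs_le] at hp
  rcases lt_trichotomy l 0 with hl | rfl | hl
  · nlinarith [mul_nonneg (by nlinarith : 0 ≤ -(p + N * l)) (by nlinarith : 0 ≤ -(p + 3 * N * l))]
  · simp [sq_nonneg]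
  · nlinarith [mul_nonneg (by nlinarith : 0 ≤ p + N * l) (by nlinarith : 0 ≤ p + 3 * N * l)]

lemma mul_freqSq_le_freqSq_aliasFreq {N : ℕ} {p q : ℤ} (hp : |p| ≤ N) (hq : |q| ≤ N)
    (l : ℤ × ℤ) : (N : ℝ) ^ 2 * freqSq l ≤ freqSq (aliasFreq N p q l) := by
  have h₁ : ((N * l.1 : ℤ) : ℝ) ^ 2 ≤ ((p + 2 * N * l.1 : ℤ) : ℝ) ^ 2 := by
    exact_mod_cast sq_mul_le_sq_add_two_mul hp
  have h₂ : ((N * l.2 : ℤ) : ℝ) ^ 2 ≤ ((q + 2 * N * l.2 : ℤ) : ℝ) ^ 2 := by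
    exact_mod_cast sq_mul_le_sq_add_two_mul hq
  push_cast at h₁ h₂
  simp only [freqSq, aliasFreq]
  push_cast
  nlinarith

lemma norm_sq_apply_aliasFreq_le {m N : ℕ} [NeZero N] {p q : ℤ} (hp : |p| ≤ N) (hq : |q| ≤ N)
    {a b : ℤ × ℤ → ℂ} {β : ℝ} (hba : ∀ P, ‖b P‖ ≤ β * ‖a P‖) (hb0 : b (p, q) = 0)
    (l : ℤ × ℤ) :
    ‖b (aliasFreq N p q l)‖ ^ 2 ≤ (((N : ℝ) ^ 2 * freqSq l) ^ m)⁻¹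
      * (β ^ 2 * (freqSq (aliasFreq N p q l) ^ m * ‖a (aliasFreq N p q l)‖ ^ 2)) := by
  have h₁ := freqSq_nonneg l
  have h₂ := freqSq_nonneg (aliasFreq N p q l)
  rcases eq_or_ne l 0 with rfl | hl
  · have : aliasFreq N p q 0 = (p, q) := by simp [aliasFreq]
    rw [this] at h₂ ⊢
    rw [hb0, norm_zero, sq, zero_mul]
    positivity
  have hN : (0 : ℝ) < N := Nat.cast_pos.mpr (NeZero.pos N)
  have hw : 0 < ((N : ℝ) ^ 2 * freqSq l) ^ m := by have := freqSq_pos hl; positivity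
  rw [← div_eq_inv_mul, le_div_iff₀ hw]
  calc ‖b (aliasFreq N p q l)‖ ^ 2 * ((N : ℝ) ^ 2 * freqSq l) ^ m
      ≤ (β * ‖a (aliasFreq N p q l)‖) ^ 2 * freqSq (aliasFreq N p q l) ^ m :=
        mul_le_mul (pow_le_pow_left₀ (norm_nonneg _) (hba _) 2)
          (pow_le_pow_left₀ (by positivity) (mul_freqSq_le_freqSq_aliasFreq hp hq l) m)
          (by positivity) (sq_nonneg _)
    _ = β ^ 2 * (freqSq (aliasFreq N p q l) ^ m * ‖a (aliasFreq N p q l)‖ ^ 2) := by ring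

lemma norm_sq_aliasSum_le {m N : ℕ} [NeZero N] (hm : 1 < m) {p q : ℤ} (hp : |p| ≤ N)
    (hq : |q| ≤ N) {a b : ℤ × ℤ → ℂ} {β : ℝ} (ha : Summable fun P => freqSq P ^ m * ‖a P‖ ^ 2)
    (hba : ∀ P, ‖b P‖ ≤ β * ‖a P‖) (hb0 : b (p, q) = 0) :
    ‖aliasSum N b p q‖ ^ 2 ≤ β ^ 2 * epsteinZeta m / (N : ℝ) ^ (2 * m)
      * aliasSum N (fun P => freqSq P ^ m * ‖a P‖ ^ 2) p q := by
  set ψ := aliasFreq N p q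
  have hψ : Function.Injective ψ := aliasFreq_injective N p q
  have hbψ : Summable fun l => ‖b (ψ l)‖ :=
    (((summable_norm_iff.mpr (summable_of_summable_freqSq_pow_mul_norm_sq hm ha)).comp_injective
      hψ).mul_left β).of_nonneg_of_le (fun _ => norm_nonneg _) fun l => hba (ψ l)
  have hweights : ∀ l : ℤ × ℤ, (((N : ℝ) ^ 2 * freqSq l) ^ m)⁻¹
      = ((N : ℝ) ^ (2 * m))⁻¹ * (freqSq l ^ m)⁻¹ := fun l => by rw [mul_pow, pow_mul, mul_inv]
  calc ‖aliasSum N b p q‖ ^ 2 ≤ (∑' l, ‖b (ψ l)‖) ^ 2 :=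
        pow_le_pow_left₀ (norm_nonneg _) (norm_tsum_le_tsum_norm hbψ) 2
    _ ≤ (∑' l, (((N : ℝ) ^ 2 * freqSq l) ^ m)⁻¹)
          * ∑' l, β ^ 2 * (freqSq (ψ l) ^ m * ‖a (ψ l)‖ ^ 2) := by
        refine sq_tsum_le_tsum_mul_tsum_of_sq_le_mul (fun _ => norm_nonneg _)
          (fun l => by have := freqSq_nonneg l; positivity)
          (fun l => by have := freqSq_nonneg (ψ l); positivity)
          (norm_sq_apply_aliasFreq_le hp hq hba hb0) ?_ ((ha.comp_injective hψ).mul_left _)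
        simp_rw [hweights]
        exact (summable_freqSq_pow_inv hm).mul_left _
    _ = _ := by
        simp_rw [hweights, tsum_mul_left, aliasSum, epsteinZeta]
        ring

lemma sum_norm_sq_aliasSum_sub_mul_le {m N : ℕ} [NeZero N] (hm : 1 < m) {a : ℤ × ℤ → ℂ}
    (ha : Summable fun P => freqSq P ^ m * ‖a P‖ ^ 2) {μ : ℤ → ℤ → ℂ} {E : ℝ}
    (hμ : ∀ p q, ‖μ p q‖ ≤ E) :
    ∑ p ∈ Ico (-(N : ℤ)) N, ∑ q ∈ Ico (-(N : ℤ)) N,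
        ‖aliasSum N (fun P => (μ P.1 P.2 - μ p q) * a P) p q‖ ^ 2
      ≤ (2 * E) ^ 2 * epsteinZeta m / (N : ℝ) ^ (2 * m)
          * ∑' P, freqSq P ^ m * ‖a P‖ ^ 2 := by
  have hIco : ∀ p ∈ Ico (-(N : ℤ)) N, |p| ≤ N := fun p hp => by
    rw [mem_Ico] at hp; rw [abs_le]; omega
  rw [ha.tsum_eq_sum_aliasSum N, mul_sum]
  refine sum_le_sum fun p hp => ?_
  rw [mul_sum]
  refine sum_le_sum fun q hq => norm_sq_aliasSum_le hm (hIco p hp) (hIco q hq) ha (fun P => ?_)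
    (by rw [sub_self, zero_mul])
  rw [norm_mul, two_mul]
  exact mul_le_mul_of_nonneg_right ((norm_sub_le _ _).trans (add_le_add (hμ _ _) (hμ _ _)))
    (norm_nonneg _)

lemma exp_sub_mul_sq_mul_le {δ τ : ℝ} (hδ : 0 < δ) (hτ : 0 ≤ τ) (s : ℝ) :
    Real.exp ((s - δ * s ^ 2) * τ) ≤ Real.exp (τ / (4 * δ)) := by
  have hs : s - δ * s ^ 2 ≤ (4 * δ)⁻¹ := by
    rw [← sub_nonneg]
    have : (4 * δ)⁻¹ - (s - δ * s ^ 2) = (2 * δ * s - 1) ^ 2 / (4 * δ) := by field_simp; ring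
    rw [this]
    positivity
  rw [Real.exp_le_exp, div_eq_mul_inv, mul_comm τ]
  exact mul_le_mul_of_nonneg_right hs hτ

lemma exp_grid_mode_eq_zpow {L : ℝ} (hL : L ≠ 0) {N : ℕ} (hN : N ≠ 0) (p q j k : ℤ) :
    Complex.exp (I * Real.pi
        * ((p : ℂ) * ((j * (L / N) : ℝ) : ℂ) + (q : ℂ) * ((k * (L / N) : ℝ) : ℂ)) / L)
      = Complex.exp (2 * Real.pi * I / (2 * N : ℕ)) ^ (p * j + q * k) := by
  have hL' : (L : ℂ) ≠ 0 := Complex.ofReal_ne_zero.mpr hL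
  have hN' : (N : ℂ) ≠ 0 := Nat.cast_ne_zero.mpr hN
  rw [← Complex.exp_int_mul]
  congr 1
  push_cast
  field_simp

end

/-- Lemma 3.4 of the paper: the discrete `L²`-error between the exactly evolved grid values
of the linear subproblem `u_t = −Δu − δΔ²u` and the pseudo-spectrally evolved grid values
is bounded by `C |u|_m e^{τ/(4δ)} N^{−m}`, with `C` depending only on `m` and `L`. -/
theorem pseudo_spectral_error (m : ℕ) (hm : 1 < m) (L : ℝ) (hL : 0 < L) :
    ∃ C : ℝ, 0 < C ∧ ∀ δ : ℝ, 0 < δ → ∀ N : ℕ, 1 ≤ N → ∀ τ : ℝ, 0 ≤ τ →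
      ∀ a : ℤ × ℤ → ℂ,
        Summable (fun pq : ℤ × ℤ => ((pq.1 : ℝ) ^ 2 + (pq.2 : ℝ) ^ 2) ^ m * ‖a pq‖ ^ 2) →
      ∀ h : ℝ, h = L / N →
      ∀ x : ℤ → ℝ, (∀ j : ℤ, x j = j * h) →
      ∀ lam : ℤ → ℤ → ℝ,
        (∀ p q : ℤ, lam p q =
          Real.pi ^ 2 * ((p : ℝ) ^ 2 + (q : ℝ) ^ 2) / L ^ 2
            - δ * (Real.pi ^ 2 * ((p : ℝ) ^ 2 + (q : ℝ) ^ 2) / L ^ 2) ^ 2) →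
      ∀ u : ℝ → ℝ → ℂ,
        (∀ X Y : ℝ, u X Y = ∑' p : ℤ, ∑' q : ℤ,
          a (p, q) * Complex.exp (Complex.I * Real.pi * ((p : ℂ) * X + (q : ℂ) * Y) / L)) →
      ∀ w : ℤ → ℤ → ℂ,
        (∀ j k : ℤ, w j k = ∑' p : ℤ, ∑' q : ℤ,
          (Real.exp (lam p q * τ) : ℂ) * a (p, q)
            * Complex.exp (Complex.I * Real.pi * ((p : ℂ) * (x j : ℝ) + (q : ℂ) * (x k : ℝ)) / L)) →
      ∀ c : ℤ → ℂ, (∀ r : ℤ, c r = if |r| = (N : ℤ) then 2 else 1) →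
      ∀ ut : ℤ → ℤ → ℂ,
        (∀ p q : ℤ, ut p q =
          (1 / (((2 * N : ℕ) : ℂ) ^ 2 * c p * c q)) *
            ∑ j ∈ Finset.Icc (1 : ℤ) (2 * N), ∑ k ∈ Finset.Icc (1 : ℤ) (2 * N),
              u (x j) (x k)
                * Complex.exp (-(Complex.I * Real.pi
                    * ((p : ℂ) * (x j : ℝ) + (q : ℂ) * (x k : ℝ)) / L))) →
      ∀ wt : ℤ → ℤ → ℂ,
        (∀ j k : ℤ, wt j k =
          ∑ p ∈ Finset.Icc (-(N : ℤ)) (N : ℤ), ∑ q ∈ Finset.Icc (-(N : ℤ)) (N : ℤ),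
            (Real.exp (lam p q * τ) : ℂ) * ut p q
              * Complex.exp (Complex.I * Real.pi * ((p : ℂ) * (x j : ℝ) + (q : ℂ) * (x k : ℝ)) / L)) →
      h ^ 2 * ∑ j ∈ Finset.Icc (1 : ℤ) (2 * N), ∑ k ∈ Finset.Icc (1 : ℤ) (2 * N),
          ‖w j k - wt j k‖ ^ 2
        ≤ C ^ 2 * Real.exp (τ / (2 * δ))
            * (∑' pq : ℤ × ℤ, ((pq.1 : ℝ) ^ 2 + (pq.2 : ℝ) ^ 2) ^ m * ‖a pq‖ ^ 2)
            / (N : ℝ) ^ (2 * m) := by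
  refine ⟨4 * L * √(epsteinZeta m), by have := epsteinZeta_pos hm; positivity, ?_⟩
  intro δ hδ N hN τ hτ a ha h hh x hx lam hlam u hu w hw c hc ut hut wt hwt
  have : NeZero N := ⟨by omega⟩
  set ζ := Complex.exp (2 * Real.pi * I / (2 * N : ℕ))
  have hζ : IsPrimitiveRoot ζ (2 * N) := Complex.isPrimitiveRoot_exp _ (NeZero.ne _)
  have hgrid : ∀ p q j k : ℤ,
      Complex.exp (I * Real.pi * ((p : ℂ) * (x j : ℝ) + (q : ℂ) * (x k : ℝ)) / L)
        = ζ ^ (p * j + q * k) := fun p q j k => by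
    simpa only [hx, hh] using exp_grid_mode_eq_zpow hL.ne' (NeZero.ne N) p q j k
  simp only [hgrid, hu, Complex.exp_neg] at hw hut hwt
  have hμ : ∀ p q, ‖(Real.exp (lam p q * τ) : ℂ)‖ ≤ Real.exp (τ / (4 * δ)) := fun p q => by
    rw [Complex.norm_real, Real.norm_of_nonneg (Real.exp_pos _).le, hlam]
    exact exp_sub_mul_sq_mul_le hδ hτ _
  have hsa := summable_of_summable_freqSq_pow_mul_norm_sq hm ha
  have hμa : Summable fun P : ℤ × ℤ => (Real.exp (lam P.1 P.2 * τ) : ℂ) * a P :=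
    ((summable_norm_iff.mpr hsa).mul_left _).of_norm_bounded fun P =>
      (norm_mul _ _).trans_le (mul_le_mul_of_nonneg_right (hμ _ _) (norm_nonneg _))
  have hlam_neg : ∀ r, lam (-N) r = lam N r ∧ lam r (-N) = lam r N := fun r => by
    simp only [hlam, Int.cast_neg, neg_sq, and_self]
  have herr := hζ.sum_norm_sq_pseudoSpectral_error_eq
    (μ := fun p q => (Real.exp (lam p q * τ) : ℂ)) hsa hμa (fun q => by rw [(hlam_neg q).1])
    (fun p => by rw [(hlam_neg p).2]) hc hw hut hwt
  have hbound := sum_norm_sq_aliasSum_sub_mul_le (N := N) hm ha hμ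
  simp only [freqSq] at hbound
  have hscale : (L / N) ^ 2 * ((2 * N : ℕ) : ℝ) ^ 2 = 4 * L ^ 2 := by
    have : (N : ℝ) ≠ 0 := Nat.cast_ne_zero.mpr (NeZero.ne N)
    push_cast; field_simp; ring
  have hexp : Real.exp (τ / (4 * δ)) ^ 2 = Real.exp (τ / (2 * δ)) := by
    rw [← Real.exp_nat_mul]; congr 1; field_simp; ring
  rw [herr, hh, ← mul_assoc, hscale]
  refine (mul_le_mul_of_nonneg_left hbound (by positivity)).trans_eq ?_
  rw [mul_pow (4 * L), Real.sq_sqrt (epsteinZeta_pos hm).le, mul_pow 2, hexp]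
  ring
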